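/- Fix d ∈ ℝ. The infimum of the transition energy ∫₀^∞ ((f(t)−1)² + (f''(t))²) dt over all twice continuously differentiable functions f : ℝ → ℝ with f(0) = d, f'(0) = 0, and f(t) → 1 as t → ∞, equals √2·(d−1)², and it is attained (for instance by f(t) = 1 − (1−d)·√2·exp(−t/√2)·cos(t/√2 − π/4) up to normalization, i.e. by 1 + (d−1)(1 − f₀(t)) where f₀ is the optimal profile). -/

import Mathlib

open MeasureTheory Filter
open scoped ENNReal

/-- The optimal profile `f₀(t) = 1 − √2·exp(−t/√2)·cos(t/√2 − π/4)`. -/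
noncomputable def optProfile : ℝ → ℝ := fun t =>
  1 - Real.sqrt 2 * Real.exp (-t / Real.sqrt 2) * Real.cos (t / Real.sqrt 2 - Real.pi / 4)

/-- The transition energy of `f : ℝ → ℝ`, as a Lebesgue lower integral over `(0,∞)`. -/
noncomputable def transitionEnergy (f : ℝ → ℝ) : ℝ≥0∞ :=
  ∫⁻ t in Set.Ioi (0 : ℝ),
    ENNReal.ofReal ((f t - 1) ^ 2 + (deriv (deriv f) t) ^ 2)

/-!
For the Lyapunov function `W(x, v) = √2 x² + 2 x v + √2 v²` and any C² function `f`,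
`d/dt W(f − 1, f') = (f − 1 + √2 f' + f'')² − ((f − 1)² + f''²)`,
so the energy on `(0, T)` is at least `W(f(0) − 1, f'(0)) − W(f(T) − 1, f'(T))`; with the boundary
conditions the first term is `√2 (d − 1)²`. Since `f → 1`, the mean value theorem gives times
`T → ∞` with `f'(T) → 0`, along which the second term vanishes. Equality forces
`f'' + √2 f' + f − 1 = 0`, whose decaying solution with `f'(0) = 0` is
`1 + (d − 1) e^{−t/√2} (cos (t/√2) + sin (t/√2))`, the given profile.
-/

open Topology Real

theorem exists_seq_tendsto_atTop_deriv_tendsto_zero {f : ℝ → ℝ} (hf : Differentiable ℝ f)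
    {L : ℝ} (hL : Tendsto f atTop (𝓝 L)) :
    ∃ ξ : ℕ → ℝ, Tendsto ξ atTop atTop ∧ Tendsto (fun n => deriv f (ξ n)) atTop (𝓝 0) := by
  have hslope (n : ℕ) := exists_deriv_eq_slope f (lt_add_one (n : ℝ)) hf.continuous.continuousOn
    hf.differentiableOn
  choose ξ hξ hderiv using hslope
  refine ⟨ξ, tendsto_atTop_mono (fun n => (hξ n).1.le) tendsto_natCast_atTop_atTop, ?_⟩
  have hnat : Tendsto (fun n : ℕ => (n : ℝ)) atTop atTop := tendsto_natCast_atTop_atTop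
  have := (hL.comp (tendsto_atTop_add_const_right _ 1 hnat)).sub (hL.comp hnat)
  simpa [hderiv] using this

noncomputable def lyapunov (x v : ℝ) : ℝ := √2 * x ^ 2 + 2 * x * v + √2 * v ^ 2

theorem hasDerivAt_lyapunov {x v : ℝ → ℝ} {a t : ℝ} (hx : HasDerivAt x (v t) t)
    (hv : HasDerivAt v a t) :
    HasDerivAt (fun u => lyapunov (x u) (v u))
      ((x t + √2 * v t + a) ^ 2 - (x t ^ 2 + a ^ 2)) t := by
  refine ((((hx.fun_pow 2).const_mul √2).add ((hx.const_mul 2).mul hv)).add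
    ((hv.fun_pow 2).const_mul √2)).congr_deriv ?_
  push_cast
  linear_combination (-v t ^ 2) * Real.sq_sqrt (zero_le_two : (0 : ℝ) ≤ 2)

theorem tendsto_lyapunov {ι : Type*} {l : Filter ι} {x v : ι → ℝ} (hx : Tendsto x l (𝓝 0))
    (hv : Tendsto v l (𝓝 0)) : Tendsto (fun i => lyapunov (x i) (v i)) l (𝓝 0) := by
  simpa [lyapunov] using
    (((hx.pow 2).const_mul √2).add ((hx.const_mul 2).mul hv)).add ((hv.pow 2).const_mul √2)

theorem ContDiff.continuous_deriv_deriv {f : ℝ → ℝ} (hf : ContDiff ℝ 2 f) :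
    Continuous (deriv (deriv f)) :=
  (hf.deriv' (n := 1)).continuous_deriv_one

theorem lyapunov_sub_le_integral {f : ℝ → ℝ} (hf : ContDiff ℝ 2 f) {T : ℝ} (hT : 0 ≤ T) :
    lyapunov (f 0 - 1) (deriv f 0) - lyapunov (f T - 1) (deriv f T) ≤
      ∫ t in 0..T, ((f t - 1) ^ 2 + deriv (deriv f) t ^ 2) := by
  have hd : Differentiable ℝ f := hf.differentiable two_ne_zero
  have hd' : Differentiable ℝ (deriv f) := (hf.deriv' (n := 1)).differentiable one_ne_zero
  have hf' : Continuous (deriv f) := hd'.continuous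
  have hf'' := hf.continuous_deriv_deriv
  have hW := fun t => hasDerivAt_lyapunov ((hd t).hasDerivAt.sub_const 1) (hd' t).hasDerivAt
  have hsq : Continuous fun t => (f t - 1 + √2 * deriv f t + deriv (deriv f) t) ^ 2 := by
    fun_prop
  have hdens : Continuous fun t => (f t - 1) ^ 2 + deriv (deriv f) t ^ 2 := by fun_prop
  have hftc := intervalIntegral.integral_eq_sub_of_hasDerivAt (a := 0) (b := T)
    (fun t _ => hW t) ((hsq.sub hdens).intervalIntegrable _ _)
  rw [intervalIntegral.integral_sub (hsq.intervalIntegrable _ _)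
    (hdens.intervalIntegrable _ _)] at hftc
  have hsq_nonneg : 0 ≤ ∫ t in 0..T, (f t - 1 + √2 * deriv f t + deriv (deriv f) t) ^ 2 :=
    intervalIntegral.integral_nonneg hT fun t _ => sq_nonneg _
  linarith

theorem ofReal_intervalIntegral_le_lintegral_Ioi {g : ℝ → ℝ} (hg : Continuous g) (hg0 : 0 ≤ g)
    {T : ℝ} (hT : 0 ≤ T) :
    ENNReal.ofReal (∫ t in 0..T, g t) ≤ ∫⁻ t in Set.Ioi 0, ENNReal.ofReal (g t) := by
  rw [intervalIntegral.integral_of_le hT, ofReal_integral_eq_lintegral_ofReal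
    hg.integrableOn_Ioc (.of_forall hg0)]
  exact lintegral_mono_set Set.Ioc_subset_Ioi_self

theorem ofReal_lyapunov_le_transitionEnergy {f : ℝ → ℝ} (hf : ContDiff ℝ 2 f)
    (hlim : Tendsto f atTop (𝓝 1)) :
    ENNReal.ofReal (lyapunov (f 0 - 1) (deriv f 0)) ≤ transitionEnergy f := by
  obtain ⟨ξ, hξ, hderiv⟩ :=
    exists_seq_tendsto_atTop_deriv_tendsto_zero (hf.differentiable two_ne_zero) hlim
  have hW : Tendsto (fun n => lyapunov (f (ξ n) - 1) (deriv f (ξ n))) atTop (𝓝 0) :=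
    tendsto_lyapunov (by simpa using (hlim.comp hξ).sub_const 1) hderiv
  have hdens : Continuous fun t => (f t - 1) ^ 2 + deriv (deriv f) t ^ 2 :=
    ((hf.continuous.sub continuous_const).pow 2).add (hf.continuous_deriv_deriv.pow 2)
  have hbound : Tendsto (fun n => ENNReal.ofReal
      (lyapunov (f 0 - 1) (deriv f 0) - lyapunov (f (ξ n) - 1) (deriv f (ξ n)))) atTop
      (𝓝 (ENNReal.ofReal (lyapunov (f 0 - 1) (deriv f 0)))) :=
    (ENNReal.continuous_ofReal.tendsto _).comp (by simpa using tendsto_const_nhds.sub hW)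
  refine le_of_tendsto hbound ?_
  filter_upwards [hξ.eventually_ge_atTop 0] with n hn
  exact (ENNReal.ofReal_le_ofReal (lyapunov_sub_le_integral hf hn)).trans
    (ofReal_intervalIntegral_le_lintegral_Ioi hdens (fun t => by positivity) hn)

noncomputable def dampedOscillation (a t : ℝ) : ℝ := exp (-(a * t)) * (cos (a * t) + sin (a * t))

theorem optProfile_eq_one_sub_dampedOscillation :
    optProfile = fun t => 1 - dampedOscillation (√2)⁻¹ t := by
  ext t
  have hs : √2 * √2 = 2 := Real.mul_self_sqrt zero_le_two
  rw [optProfile, dampedOscillation, cos_sub, cos_pi_div_four, sin_pi_div_four,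
    show -t / √2 = -((√2)⁻¹ * t) by ring, show t / √2 = (√2)⁻¹ * t by ring]
  linear_combination (-(exp (-((√2)⁻¹ * t)) * (cos ((√2)⁻¹ * t) + sin ((√2)⁻¹ * t))) / 2) * hs

theorem contDiff_dampedOscillation (a : ℝ) {n : WithTop ℕ∞} :
    ContDiff ℝ n (dampedOscillation a) := by
  unfold dampedOscillation; fun_prop

theorem hasDerivAt_dampedOscillation (a t : ℝ) :
    HasDerivAt (dampedOscillation a) (-2 * a * exp (-(a * t)) * sin (a * t)) t := by
  have hlin : HasDerivAt (fun t => a * t) a t := by simpa using (hasDerivAt_id t).const_mul a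
  refine (hlin.fun_neg.exp.mul (hlin.cos.fun_add hlin.sin)).congr_deriv ?_
  ring

theorem hasDerivAt_deriv_dampedOscillation (a t : ℝ) :
    HasDerivAt (fun t => -2 * a * exp (-(a * t)) * sin (a * t))
      (2 * a ^ 2 * exp (-(a * t)) * (sin (a * t) - cos (a * t))) t := by
  have hlin : HasDerivAt (fun t => a * t) a t := by simpa using (hasDerivAt_id t).const_mul a
  refine ((hlin.fun_neg.exp.const_mul (-2 * a)).mul hlin.sin).congr_deriv ?_
  ring

theorem deriv_dampedOscillation (a : ℝ) :
    deriv (dampedOscillation a) = fun t => -2 * a * exp (-(a * t)) * sin (a * t) :=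
  funext fun t => (hasDerivAt_dampedOscillation a t).deriv

theorem deriv_deriv_dampedOscillation (a : ℝ) :
    deriv (deriv (dampedOscillation a)) =
      fun t => 2 * a ^ 2 * exp (-(a * t)) * (sin (a * t) - cos (a * t)) := by
  rw [deriv_dampedOscillation]
  exact funext fun t => (hasDerivAt_deriv_dampedOscillation a t).deriv

theorem dampedOscillation_zero (a : ℝ) : dampedOscillation a 0 = 1 := by
  simp [dampedOscillation]

theorem tendsto_dampedOscillation {a : ℝ} (ha : 0 < a) :
    Tendsto (dampedOscillation a) atTop (𝓝 0) := by
  have hexp : Tendsto (fun t => exp (-(a * t))) atTop (𝓝 0) :=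
    tendsto_exp_neg_atTop_nhds_zero.comp (tendsto_id.const_mul_atTop ha)
  refine squeeze_zero_norm (fun t => ?_) (by simpa using hexp.const_mul 2)
  rw [dampedOscillation, norm_mul, norm_of_nonneg (exp_pos _).le, mul_comm]
  gcongr
  calc ‖cos (a * t) + sin (a * t)‖ ≤ ‖cos (a * t)‖ + ‖sin (a * t)‖ := norm_add_le _ _
    _ ≤ 1 + 1 := add_le_add (abs_cos_le_one _) (abs_sin_le_one _)
    _ = 2 := one_add_one_eq_two

theorem transitionEnergy_dampedOscillation (k : ℝ) :
    transitionEnergy (fun t => 1 + k * dampedOscillation (√2)⁻¹ t) =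
      ENNReal.ofReal (√2 * k ^ 2) := by
  have hs : √2 ^ 2 = 2 := Real.sq_sqrt zero_le_two
  have hdens (t : ℝ) : (1 + k * dampedOscillation (√2)⁻¹ t - 1) ^ 2 +
      deriv (deriv fun t => 1 + k * dampedOscillation (√2)⁻¹ t) t ^ 2 =
        2 * k ^ 2 * exp (-√2 * t) := by
    simp only [deriv_const_add', deriv_const_mul_field', deriv_deriv_dampedOscillation]
    simp only [dampedOscillation]
    have hexp : exp (-((√2)⁻¹ * t)) ^ 2 = exp (-√2 * t) := by
      rw [← exp_nat_mul]; congr 1; field_simp; linear_combination t * hs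
    have hinv : 2 * (√2)⁻¹ ^ 2 = 1 := by rw [inv_pow, hs]; norm_num
    rw [hinv, ← hexp]
    linear_combination (2 * k ^ 2 * exp (-((√2)⁻¹ * t)) ^ 2) * sin_sq_add_cos_sq ((√2)⁻¹ * t)
  have hint : IntegrableOn (fun t => 2 * k ^ 2 * exp (-√2 * t)) (Set.Ioi 0) :=
    (exp_neg_integrableOn_Ioi 0 (by positivity)).const_mul _
  rw [transitionEnergy]
  simp_rw [hdens]
  rw [← ofReal_integral_eq_lintegral_ofReal hint (.of_forall fun t => by positivity),
    integral_const_mul, integral_exp_mul_Ioi (neg_lt_zero.mpr (by positivity))]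
  congr 1
  field_simp
  rw [mul_zero, neg_zero, exp_zero, hs]
  ring

/-- For each `d ∈ ℝ`, the infimum of the transition energy over all C² functions
with `f(0) = d`, `f'(0) = 0`, `f(t) → 1` as `t → ∞` equals `√2·(d−1)²`, and it is
attained by `t ↦ 1 + (d−1)(1 − f₀(t))` where `f₀` is the optimal profile. -/
theorem optimal_profile_infimum_d (d : ℝ) :
    sInf { E : ℝ≥0∞ | ∃ f : ℝ → ℝ, ContDiff ℝ 2 f ∧ f 0 = d ∧ deriv f 0 = 0 ∧
          Tendsto f atTop (nhds 1) ∧ E = transitionEnergy f } =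
        ENNReal.ofReal (Real.sqrt 2 * (d - 1) ^ 2) ∧
      transitionEnergy (fun t => 1 + (d - 1) * (1 - optProfile t)) =
        ENNReal.ofReal (Real.sqrt 2 * (d - 1) ^ 2) := by
  have hprofile : (fun t => 1 + (d - 1) * (1 - optProfile t)) =
      fun t => 1 + (d - 1) * dampedOscillation (√2)⁻¹ t := by
    simp only [optProfile_eq_one_sub_dampedOscillation, sub_sub_cancel]
  have henergy := transitionEnergy_dampedOscillation (d - 1)
  refine ⟨le_antisymm (sInf_le ⟨_, ?_, ?_, ?_, ?_, henergy.symm⟩) (le_sInf ?_),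
    hprofile ▸ henergy⟩
  · exact contDiff_const.add (contDiff_const.mul (contDiff_dampedOscillation _))
  · simp [dampedOscillation_zero]
  · simp [deriv_const_add', deriv_const_mul_field', deriv_dampedOscillation]
  · simpa using ((tendsto_dampedOscillation (by positivity)).const_mul (d - 1)).const_add 1
  · rintro _ ⟨f, hf, h0, h1, hlim, rfl⟩
    simpa [lyapunov, h0, h1] using ofReal_lyapunov_le_transitionEnergy hf hlim
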